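/- arXiv:2512.01876 — 2 statements merged into one kernel-verified Lean document; each statement's English description precedes it below -/
import Mathlib

section
/- Let (A,B) be controllable and let x_0 ∈ ℝ^n. Then there exists input-state data D = (u,x) of length T = n + m consistent with (A,B) with x(0) = x_0 such that the stacked (n+m)×(n+m) matrix [X_-; U_-] has rank n+m; in particular, D is Σ_cont-informative for identification. -/
open Matrix

/-- A system: a pair `(A, B)` of real matrices of sizes `n × n` and `n × m`. -/
abbrev Sys (n m : ℕ) := Matrix (Fin n) (Fin n) ℝ × Matrix (Fin n) (Fin m) ℝ

/-- `(A, B)` is consistent with the input-state data `(u, x)` of length `T`. -/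
def Consistent {n m T : ℕ} (A : Matrix (Fin n) (Fin n) ℝ) (B : Matrix (Fin n) (Fin m) ℝ)
    (u : Fin T → Fin m → ℝ) (x : Fin (T + 1) → Fin n → ℝ) : Prop :=
  ∀ t : Fin T, x t.succ = A.mulVec (x t.castSucc) + B.mulVec (u t)

/-- The set `Σ_D` of systems consistent with the data `(u, x)`. -/
def SigmaD {n m T : ℕ} (u : Fin T → Fin m → ℝ) (x : Fin (T + 1) → Fin n → ℝ) :
    Set (Sys n m) :=
  {AB | Consistent AB.1 AB.2 u x}

/-- The matrix `X₋ = [x(0) ⋯ x(T-1)]`. -/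
def Xminus {n T : ℕ} (x : Fin (T + 1) → Fin n → ℝ) : Matrix (Fin n) (Fin T) ℝ :=
  Matrix.of fun i t => x t.castSucc i

/-- The matrix `X₊ = [x(1) ⋯ x(T)]`. -/
def Xplus {n T : ℕ} (x : Fin (T + 1) → Fin n → ℝ) : Matrix (Fin n) (Fin T) ℝ :=
  Matrix.of fun i t => x t.succ i

/-- The matrix `U₋ = [u(0) ⋯ u(T-1)]`. -/
def Uminus {m T : ℕ} (u : Fin T → Fin m → ℝ) : Matrix (Fin m) (Fin T) ℝ :=
  Matrix.of fun i t => u t i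

/-- The stacked matrix `[X₋; U₋]`. -/
def stacked {n m T : ℕ} (X : Matrix (Fin n) (Fin T) ℝ) (U : Matrix (Fin m) (Fin T) ℝ) :
    Matrix (Fin n ⊕ Fin m) (Fin T) ℝ :=
  Matrix.fromRows X U

/-- A real square matrix is Schur if all its complex eigenvalues have modulus `< 1`. -/
def Schur {n : ℕ} (M : Matrix (Fin n) (Fin n) ℝ) : Prop :=
  ∀ μ ∈ spectrum ℂ (M.map ((↑·) : ℝ → ℂ)), ‖μ‖ < 1

/-- The matrix `[C  AC  ⋯  A^{n-1}C]`. -/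
def reachMat {n : ℕ} (A : Matrix (Fin n) (Fin n) ℝ) {p : Type*} (C : Matrix (Fin n) p ℝ) :
    Matrix (Fin n) (Fin n × p) ℝ :=
  Matrix.of fun i q => (A ^ (q.1 : ℕ) * C) i q.2

/-- The column span of a matrix, as a submodule. -/
def colSpan {p : Type*} {q : Type*} [Fintype q] (M : Matrix p q ℝ) :
    Submodule ℝ (p → ℝ) :=
  LinearMap.range M.mulVecLin

/-- The reachable subspace `R(A, C)`: the column span of `[C AC ⋯ A^{n-1}C]`. -/
def Rspace {n : ℕ} (A : Matrix (Fin n) (Fin n) ℝ) {p : Type*} [Fintype p]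
    (C : Matrix (Fin n) p ℝ) : Submodule ℝ (Fin n → ℝ) :=
  colSpan (reachMat A C)

/-- `(A, B)` is controllable. -/
def Controllable {n m : ℕ} (A : Matrix (Fin n) (Fin n) ℝ) (B : Matrix (Fin n) (Fin m) ℝ) :
    Prop :=
  (reachMat A B).rank = n

/-- `(A, B)` is stabilizable. -/
def Stabilizable {n m : ℕ} (A : Matrix (Fin n) (Fin n) ℝ) (B : Matrix (Fin n) (Fin m) ℝ) :
    Prop :=
  ∃ K : Matrix (Fin m) (Fin n) ℝ, Schur (A + B * K)

/-- The set `Σ_cont` of controllable systems. -/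
def SigmaCont (n m : ℕ) : Set (Sys n m) := {AB | Controllable AB.1 AB.2}

/-- The set `Σ_stab` of stabilizable systems. -/
def SigmaStab (n m : ℕ) : Set (Sys n m) := {AB | Stabilizable AB.1 AB.2}

/-- Data `(u, x)` is `P`-informative for identification: `Σ_D ∩ P` is a singleton. -/
def InfId {n m T : ℕ} (P : Set (Sys n m)) (u : Fin T → Fin m → ℝ)
    (x : Fin (T + 1) → Fin n → ℝ) : Prop :=
  ∃ s : Sys n m, SigmaD u x ∩ P = {s}

/-- Data `(u, x)` is `P`-informative for stabilization. -/
def InfStab {n m T : ℕ} (P : Set (Sys n m)) (u : Fin T → Fin m → ℝ)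
    (x : Fin (T + 1) → Fin n → ℝ) : Prop :=
  ∃ K : Matrix (Fin m) (Fin n) ℝ, ∀ AB ∈ SigmaD u x ∩ P, Schur (AB.1 + AB.2 * K)

/-- An input is `P`-universal for identification. -/
def UnivId {n m T : ℕ} (P : Set (Sys n m)) (u : Fin T → Fin m → ℝ) : Prop :=
  ∀ AB ∈ P, ∀ x : Fin (T + 1) → Fin n → ℝ, Consistent AB.1 AB.2 u x → InfId P u x

/-- An input is `P`-universal for stabilization. -/
def UnivStab {n m T : ℕ} (P : Set (Sys n m)) (u : Fin T → Fin m → ℝ) : Prop :=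
  ∀ AB ∈ P, ∀ x : Fin (T + 1) → Fin n → ℝ, Consistent AB.1 AB.2 u x → InfStab P u x

/-- The Hankel matrix of depth `k` of the input sequence `u`. -/
def Hankel {m T : ℕ} (u : Fin T → Fin m → ℝ) (k : ℕ) :
    Matrix (Fin k × Fin m) (Fin (T + 1 - k)) ℝ :=
  Matrix.of fun q i =>
    u ⟨i.val + q.1.val, by have h1 := i.isLt; have h2 := q.1.isLt; omega⟩ q.2

/-- The input sequence `u` is persistently exciting of order `k`. -/
def PE {m T : ℕ} (u : Fin T → Fin m → ℝ) (k : ℕ) : Prop :=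
  (Hankel u k).rank = k * m

/-- The matrix `[B  x₀]` obtained by appending the column `x₀` to `B`. -/
def augCol {n m : ℕ} (B : Matrix (Fin n) (Fin m) ℝ) (x0 : Fin n → ℝ) :
    Matrix (Fin n) (Fin m ⊕ Fin 1) ℝ :=
  Matrix.fromCols B (Matrix.of fun i _ => x0 i)

/-- Precomposition with `Sum.inl`, extracting the `ℝ^n`-component of a vector in
`ℝ^n × ℝ^m ≃ (Fin n ⊕ Fin m) → ℝ`. -/
def projN (n m : ℕ) : ((Fin n ⊕ Fin m) → ℝ) →ₗ[ℝ] (Fin n → ℝ) :=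
  LinearMap.funLeft ℝ ℝ Sum.inl

/-!
The data are built one input at a time. Write `z(t) = (x(t), u(t))` and `V_t` for the span of
`x(0), …, x(t-1)`. We keep the invariant that `z(0), …, z(t-1)` are linearly independent and that
`t = 0`, or `V_t` is the whole space, or `x(t) ∉ V_t`. Under it, while `t < n + m`, some input
keeps `z(t)` out of the span of the earlier pairs. Unless `V_{t+1}` is the whole space, some input
also puts `x(t+1) = A x(t) + B u(t)` outside `V_{t+1}`: otherwise `V_{t+1}` would be an
`A`-invariant subspace containing the image of `B`, which controllability forbids. The bad inputs
for either requirement form a proper affine subspace of `ℝ^m`, and two of those never cover the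
space, so one input meets both. After `n + m` steps `[X₋; U₋]` is invertible, and
`[A B] [X₋; U₋] = X₊` then pins down `(A, B)`.
-/

open Submodule

theorem AffineSubspace.exists_notMem_and_notMem {k V P : Type*} [Field k] [NeZero (2 : k)]
    [AddCommGroup V] [Module k V] [AddTorsor V P] {s t : AffineSubspace k P}
    (hs : ∃ a, a ∉ s) (ht : ∃ b, b ∉ t) : ∃ p, p ∉ s ∧ p ∉ t := by
  obtain ⟨a, ha⟩ := hs
  obtain ⟨b, hb⟩ := ht
  by_cases hat : a ∈ t
  swap
  · exact ⟨a, ha, hat⟩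
  by_cases hbs : b ∈ s
  swap
  · exact ⟨b, hbs, hb⟩
  -- the reflection `c` of `b` in `a`: `a` is the midpoint of `b c`, and `b` lies on line `a c`
  refine ⟨(2 : k) • (a -ᵥ b) +ᵥ b, fun hc => ha ?_, fun hc => hb ?_⟩
  · simpa [AffineMap.lineMap_vadd_apply, smul_smul, inv_mul_cancel₀ (two_ne_zero' k)]
      using AffineMap.lineMap_mem (2⁻¹ : k) hbs hc
  · rw [two_smul, add_vadd, vsub_vadd] at hc
    simpa [AffineMap.lineMap_vadd_apply] using AffineMap.lineMap_mem (-1 : k) hat hc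

theorem Matrix.eq_of_mul_eq_mul_of_rank_eq_card {K l m n : Type*} [Field K] [Fintype m]
    [Fintype n] {N N' : Matrix l m K} {M : Matrix m n K} (hM : M.rank = Fintype.card m)
    (h : N * M = N' * M) : N = N' := by
  have hrows : LinearIndependent K M.row := by
    rw [linearIndependent_iff_card_eq_finrank_span, Set.finrank, ← rank_eq_finrank_span_row, hM]
  funext i
  exact Matrix.vecMul_injective_iff.mpr hrows (congrFun h i)

theorem Matrix.rank_eq_card_of_linearIndependent_col {K m n : Type*} [Field K] [Fintype m]
    [Fintype n] {M : Matrix m n K} (h : LinearIndependent K M.col) : M.rank = Fintype.card n := by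
  rw [← rank_transpose]
  exact h.rank_matrix

theorem Controllable.eq_top_of_invariant {n m : ℕ} {A : Matrix (Fin n) (Fin n) ℝ}
    {B : Matrix (Fin n) (Fin m) ℝ} (h : Controllable A B) {V : Submodule ℝ (Fin n → ℝ)}
    (hA : ∀ v ∈ V, A *ᵥ v ∈ V) (hB : ∀ v, B *ᵥ v ∈ V) : V = ⊤ := by
  have hrange : LinearMap.range (reachMat A B).mulVecLin = ⊤ :=
    eq_top_of_finrank_eq (by rw [Module.finrank_fin_fun]; exact h)
  rw [eq_top_iff, ← hrange, Matrix.range_mulVecLin, span_le]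
  rintro _ ⟨⟨k, j⟩, rfl⟩
  have hcol : (reachMat A B).col (k, j) = (Matrix.toLin' A ^ (k : ℕ)) (B *ᵥ Pi.single j 1) := by
    rw [← Matrix.toLin'_pow, Matrix.toLin'_apply, Matrix.mulVec_mulVec, Matrix.mulVec_single_one]
    rfl
  rw [hcol]
  exact Module.End.pow_apply_mem_of_forall_mem _ hA _ (hB _)

section Identification

variable {n m T : ℕ} {A A' : Matrix (Fin n) (Fin n) ℝ} {B B' : Matrix (Fin n) (Fin m) ℝ}
  {u : Fin T → Fin m → ℝ} {x : Fin (T + 1) → Fin n → ℝ}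

theorem consistent_iff_fromCols_mul_stacked :
    Consistent A B u x ↔ Matrix.fromCols A B * stacked (Xminus x) (Uminus u) = Xplus x := by
  rw [stacked, Matrix.fromCols_mul_fromRows, Consistent, ← Matrix.ext_iff, forall_comm]
  simp only [funext_iff, Pi.add_apply, Matrix.add_apply, Matrix.mul_apply, Matrix.mulVec,
    dotProduct, Xminus, Uminus, Xplus, Matrix.of_apply, eq_comm]

theorem Consistent.unique_of_rank (h : Consistent A B u x) (h' : Consistent A' B' u x)
    (hrank : (stacked (Xminus x) (Uminus u)).rank = n + m) : A' = A ∧ B' = B := by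
  rw [consistent_iff_fromCols_mul_stacked] at h h'
  have hrank' : (stacked (Xminus x) (Uminus u)).rank = Fintype.card (Fin n ⊕ Fin m) := by
    simpa using hrank
  exact Matrix.fromCols_inj.eq_iff.mp
    (Matrix.eq_of_mul_eq_mul_of_rank_eq_card hrank' (h'.trans h.symm))

theorem infId_of_rank_stacked {P : Set (Sys n m)} (h : Consistent A B u x) (hP : (A, B) ∈ P)
    (hrank : (stacked (Xminus x) (Uminus u)).rank = n + m) : InfId P u x := by
  refine ⟨(A, B), Set.eq_singleton_iff_unique_mem.mpr ⟨⟨h, hP⟩, ?_⟩⟩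
  rintro ⟨A', B'⟩ ⟨h', -⟩
  obtain ⟨rfl, rfl⟩ := h.unique_of_rank h' hrank
  rfl

end Identification

section Trajectory

variable {n m : ℕ} (A : Matrix (Fin n) (Fin n) ℝ) (B : Matrix (Fin n) (Fin m) ℝ) (x0 : Fin n → ℝ)

def traj (w : ℕ → Fin m → ℝ) : ℕ → Fin n → ℝ
  | 0 => x0
  | t + 1 => A *ᵥ traj w t + B *ᵥ w t

def stateSpan (w : ℕ → Fin m → ℝ) (t : ℕ) : Submodule ℝ (Fin n → ℝ) :=
  span ℝ (Set.range fun i : Fin t => traj A B x0 w i)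

def stateInputSpan (w : ℕ → Fin m → ℝ) (t : ℕ) : Submodule ℝ ((Fin n → ℝ) × (Fin m → ℝ)) :=
  span ℝ (Set.range fun i : Fin t => (traj A B x0 w i, w i))

def GoodPrefix (w : ℕ → Fin m → ℝ) (t : ℕ) : Prop :=
  LinearIndependent ℝ (fun i : Fin t => (traj A B x0 w i, w i)) ∧
    (t = 0 ∨ stateSpan A B x0 w t = ⊤ ∨ traj A B x0 w t ∉ stateSpan A B x0 w t)

variable {A B x0}

theorem traj_update_of_le {w : ℕ → Fin m → ℝ} {t : ℕ} (v : Fin m → ℝ) :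
    ∀ {s}, s ≤ t → traj A B x0 (Function.update w t v) s = traj A B x0 w s
  | 0, _ => rfl
  | s + 1, hs => by
    rw [traj, traj, traj_update_of_le v (by omega), Function.update_of_ne (by omega)]

theorem map_fst_stateInputSpan (w : ℕ → Fin m → ℝ) (t : ℕ) :
    (stateInputSpan A B x0 w t).map (LinearMap.fst ℝ _ _) = stateSpan A B x0 w t := by
  rw [stateInputSpan, map_span, ← Set.range_comp]
  rfl

theorem GoodPrefix.exists_notMem_stateInputSpan (hm : 0 < m) {w : ℕ → Fin m → ℝ} {t : ℕ}
    (h : GoodPrefix A B x0 w t) (ht : t < n + m) :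
    ∃ v, (traj A B x0 w t, v) ∉ stateInputSpan A B x0 w t := by
  by_contra! hall
  have hinr :
      LinearMap.ker (LinearMap.fst ℝ (Fin n → ℝ) (Fin m → ℝ)) ≤ stateInputSpan A B x0 w t := by
    rw [LinearMap.ker_fst]
    rintro _ ⟨v, rfl⟩
    simpa using sub_mem (hall v) (hall 0)
  obtain ⟨hli, rfl | htop | hnew⟩ := h
  · have := hinr (show ((0 : Fin n → ℝ), Pi.single ⟨0, hm⟩ (1 : ℝ)) ∈ LinearMap.ker _ by simp)
    simp [stateInputSpan] at this
  · have hS : stateInputSpan A B x0 w t = ⊤ := by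
      rwa [← map_fst_stateInputSpan, LinearMap.map_eq_top_iff Submodule.range_fst,
        sup_eq_left.mpr hinr] at htop
    have := finrank_span_eq_card hli
    rw [← stateInputSpan, hS, finrank_top, Module.finrank_prod, Module.finrank_fin_fun,
      Module.finrank_fin_fun, Fintype.card_fin] at this
    omega
  · exact hnew (map_fst_stateInputSpan w t ▸ ⟨_, hall 0, rfl⟩)

theorem Controllable.exists_notMem_stateSpan_succ (hc : Controllable A B) {w : ℕ → Fin m → ℝ}
    {t : ℕ} (hV : stateSpan A B x0 w (t + 1) ≠ ⊤) :
    ∃ v, A *ᵥ traj A B x0 w t + B *ᵥ v ∉ stateSpan A B x0 w (t + 1) := by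
  by_contra! hall
  set V := stateSpan A B x0 w (t + 1)
  have hB : ∀ v, B *ᵥ v ∈ V := fun v => by
    simpa using V.sub_mem (hall v) (hall 0)
  have hA : ∀ v ∈ V, A *ᵥ v ∈ V := by
    refine fun v hv => (span_le (p := V.comap (Matrix.toLin' A))).mpr ?_ hv
    rintro _ ⟨⟨s, hs⟩, rfl⟩
    obtain hs | rfl := Nat.lt_succ_iff_lt_or_eq.mp hs
    · have hnext : traj A B x0 w (s + 1) ∈ V := subset_span ⟨⟨s + 1, by omega⟩, rfl⟩
      simpa [traj] using V.sub_mem hnext (hB (w s))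
    · simpa using hall 0
  exact hV (hc.eq_top_of_invariant hA hB)

theorem GoodPrefix.update {w : ℕ → Fin m → ℝ} {t : ℕ} {v : Fin m → ℝ}
    (h : GoodPrefix A B x0 w t)
    (hnew : (traj A B x0 w t, v) ∉ stateInputSpan A B x0 w t)
    (hnext : stateSpan A B x0 w (t + 1) = ⊤ ∨
      A *ᵥ traj A B x0 w t + B *ᵥ v ∉ stateSpan A B x0 w (t + 1)) :
    GoodPrefix A B x0 (Function.update w t v) (t + 1) := by
  set w' := Function.update w t v
  have hpairs : (fun i : Fin (t + 1) => (traj A B x0 w' i, w' i)) =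
      Fin.snoc (fun i : Fin t => (traj A B x0 w i, w i)) (traj A B x0 w t, v) := by
    funext i
    refine Fin.lastCases ?_ (fun j => ?_) i
    · simp [w', traj_update_of_le]
    · simp [w', traj_update_of_le, j.isLt.le, Function.update_of_ne j.isLt.ne]
  have hspan : stateSpan A B x0 w' (t + 1) = stateSpan A B x0 w (t + 1) := by
    simp only [stateSpan]
    congr
    funext i
    exact traj_update_of_le v (Nat.lt_succ_iff.mp i.isLt)
  have hstep : traj A B x0 w' (t + 1) = A *ᵥ traj A B x0 w t + B *ᵥ v := by
    simp [traj, w', traj_update_of_le]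
  refine ⟨?_, Or.inr ?_⟩
  · rw [hpairs]
    exact linearIndependent_finSnoc.mpr ⟨h.1, hnew⟩
  · rwa [hspan, hstep]

theorem GoodPrefix.exists_update (hm : 0 < m) (hc : Controllable A B) {w : ℕ → Fin m → ℝ}
    {t : ℕ} (h : GoodPrefix A B x0 w t) (ht : t < n + m) :
    ∃ v, GoodPrefix A B x0 (Function.update w t v) (t + 1) := by
  obtain ⟨v₁, hv₁⟩ := h.exists_notMem_stateInputSpan hm ht
  by_cases hV : stateSpan A B x0 w (t + 1) = ⊤
  · exact ⟨v₁, h.update hv₁ (Or.inl hV)⟩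
  obtain ⟨v₂, hv₂⟩ := hc.exists_notMem_stateSpan_succ hV
  let φ : (Fin m → ℝ) →ᵃ[ℝ] (Fin n → ℝ) × (Fin m → ℝ) :=
    (AffineMap.const ℝ _ (traj A B x0 w t)).prod (AffineMap.id ℝ _)
  let ψ : (Fin m → ℝ) →ᵃ[ℝ] (Fin n → ℝ) :=
    AffineMap.const ℝ _ (A *ᵥ traj A B x0 w t) + (Matrix.toLin' B).toAffineMap
  obtain ⟨v, hv, hv'⟩ := AffineSubspace.exists_notMem_and_notMem
    (s := (stateInputSpan A B x0 w t).toAffineSubspace.comap φ)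
    (t := (stateSpan A B x0 w (t + 1)).toAffineSubspace.comap ψ)
    ⟨v₁, by simpa [φ] using hv₁⟩ ⟨v₂, by simpa [ψ] using hv₂⟩
  exact ⟨v, h.update (by simpa [φ] using hv) (Or.inr (by simpa [ψ] using hv'))⟩

theorem exists_goodPrefix (hm : 0 < m) (hc : Controllable A B) :
    ∀ t ≤ n + m, ∃ w, GoodPrefix A B x0 w t
  | 0, _ => ⟨0, linearIndependent_empty_type, Or.inl rfl⟩
  | t + 1, ht => by
    obtain ⟨w, hw⟩ := exists_goodPrefix hm hc t (by omega)
    obtain ⟨v, hv⟩ := hw.exists_update hm hc (by omega)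
    exact ⟨_, hv⟩

end Trajectory

theorem stmt_17_general {n m : ℕ} (hm : 0 < m)
    (A : Matrix (Fin n) (Fin n) ℝ) (B : Matrix (Fin n) (Fin m) ℝ)
    (hcont : Controllable A B) (x0 : Fin n → ℝ) :
    ∃ (u : Fin (n + m) → Fin m → ℝ) (x : Fin (n + m + 1) → Fin n → ℝ),
      Consistent A B u x ∧ x 0 = x0 ∧
      (stacked (Xminus x) (Uminus u)).rank = n + m ∧
      InfId (SigmaCont n m) u x := by
  obtain ⟨w, hli, -⟩ := exists_goodPrefix (x0 := x0) hm hcont (n + m) le_rfl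
  let u : Fin (n + m) → Fin m → ℝ := fun t => w t
  let x : Fin (n + m + 1) → Fin n → ℝ := fun t => traj A B x0 w t
  have hcons : Consistent A B u x := fun _ => rfl
  have hcols : (stacked (Xminus x) (Uminus u)).col =
      (LinearEquiv.sumArrowLequivProdArrow _ _ ℝ ℝ).symm ∘
        fun t : Fin (n + m) => (traj A B x0 w t, w t) := by
    funext t q
    cases q <;> rfl
  have hrank : (stacked (Xminus x) (Uminus u)).rank = n + m := by
    rw [Matrix.rank_eq_card_of_linearIndependent_col (hcols ▸ hli.map' _ (LinearEquiv.ker _)),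
      Fintype.card_fin]
  exact ⟨u, x, hcons, rfl, hrank, infId_of_rank_stacked hcons hcont hrank⟩

/-- For a controllable `(A,B)` and any initial state `x₀`, there exists
data of length `T = n + m` consistent with `(A,B)`, starting at `x₀`, such that
`[X₋; U₋]` has rank `n + m`; in particular, the data is `Σ_cont`-informative
for identification. -/
theorem stmt_17 {n m : ℕ} (hn : 0 < n) (hm : 0 < m)
    (A : Matrix (Fin n) (Fin n) ℝ) (B : Matrix (Fin n) (Fin m) ℝ)
    (hcont : Controllable A B) (x0 : Fin n → ℝ) :
    ∃ (u : Fin (n + m) → Fin m → ℝ) (x : Fin (n + m + 1) → Fin n → ℝ),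
      Consistent A B u x ∧ x 0 = x0 ∧
      (stacked (Xminus x) (Uminus u)).rank = n + m ∧
      InfId (SigmaCont n m) u x :=
  stmt_17_general hm A B hcont x0
end

section
/- Let (A,B) be stabilizable and let x_0 ∈ ℝ^n. Then there exists input-state data D = (u,x) of length T = dim R(A,[B x_0]) + m consistent with (A,B) with x(0) = x_0 such that D is Σ_stab-informative for stabilization, where [B x_0] is the n×(m+1) matrix obtained by appending x_0 to B. -/
open Matrix

/-! The reachable subspace `V = R(A, [B x₀])` is the smallest subspace containing `x₀` that the
dynamics `x ↦ A x + B u` keep invariant for every input `u`. Choose the inputs greedily: first so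
that the next state leaves the span of the states visited so far, and, once that is impossible
(which only happens when the visited states span `V`), so that the new sample `(x(t), u(t))` is
independent of the previous ones. Every sample then enlarges the span of the samples until it is
`V × ℝᵐ`, so `dim V + m` samples suffice, and every system `(A', B')` consistent with them has
`B' = B` and `A' = A` on `V`. If `A + B K` is Schur and `(A', B)` is stabilized by `K'`, then
`A' + B K` agrees with `A + B K` on the common invariant subspace `V` and with `A' + B K'` modulo
`V`, so each of its eigenvalues is an eigenvalue of one of these two Schur matrices. -/

open Module Submodule

-- An eigenvector `z ∉ W` of `f` forces `μ ∈ spectrum g`: otherwise `μ - g` restricts to a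
-- bijection of `W`, and `(μ - g) z = (f - g) z ∈ W` would put `z` in `W`.
theorem Module.End.spectrum_subset_union_of_invariant {K V : Type*} [Field K] [AddCommGroup V]
    [Module K V] [FiniteDimensional K V] (W : Submodule K V) {f f₀ g : Module.End K V}
    (hg : ∀ w ∈ W, g w ∈ W) (hf₀ : ∀ w ∈ W, f w = f₀ w) (hfg : ∀ v, (f - g) v ∈ W) :
    spectrum K f ⊆ spectrum K f₀ ∪ spectrum K g := by
  intro μ hμ
  obtain ⟨z, hz⟩ := (Module.End.hasEigenvalue_iff_mem_spectrum.2 hμ).exists_hasEigenvector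
  have hfz : f z = μ • z := Module.End.mem_eigenspace_iff.1 hz.1
  by_cases hzW : z ∈ W
  · left
    refine Module.End.hasEigenvalue_iff_mem_spectrum.1
      (Module.End.hasEigenvalue_of_hasEigenvector ⟨Module.End.mem_eigenspace_iff.2 ?_, hz.2⟩)
    rw [← hf₀ z hzW, hfz]
  right
  by_contra hμg
  set h : Module.End K V := algebraMap K (Module.End K V) μ - g
  have hinj : Function.Injective h :=
    (Module.End.isUnit_iff h).1 (spectrum.notMem_iff.1 hμg) |>.injective
  have hhW : ∀ w ∈ W, h w ∈ W := fun w hw => by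
    simpa [h] using sub_mem (W.smul_mem μ hw) (hg w hw)
  have hrinj : Function.Injective (h.restrict hhW) := fun a b hab =>
    Subtype.ext (hinj (congrArg Subtype.val hab))
  obtain ⟨⟨y, hyW⟩, hy⟩ := LinearMap.injective_iff_surjective.1 hrinj
    ⟨h z, by simpa [h, hfz] using hfg z⟩
  exact hzW (hinj (congrArg Subtype.val hy) ▸ hyW)

section Complexify

variable {ι : Type*}

def complexify (V : Submodule ℝ (ι → ℝ)) : Submodule ℂ (ι → ℂ) :=
  span ℂ ((fun (v : ι → ℝ) i => (v i : ℂ)) '' V)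

lemma complexify_top : complexify (⊤ : Submodule ℝ (ι → ℝ)) = ⊤ := by
  refine eq_top_iff.2 fun z _ => ?_
  have hz : z = (fun i => ((z i).re : ℂ)) + Complex.I • fun i => ((z i).im : ℂ) := by
    funext i
    rw [Pi.add_apply, Pi.smul_apply, smul_eq_mul, mul_comm]
    exact (Complex.re_add_im _).symm
  rw [hz]
  exact add_mem (subset_span ⟨_, trivial, rfl⟩) (smul_mem _ _ (subset_span ⟨_, trivial, rfl⟩))

lemma complexify_bot : complexify (⊥ : Submodule ℝ (ι → ℝ)) = ⊥ := by
  simp [complexify, ← Pi.zero_def]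

variable [Fintype ι]

lemma map_ofReal_mulVec (Q : Matrix ι ι ℝ) (v : ι → ℝ) :
    Q.map ((↑·) : ℝ → ℂ) *ᵥ (fun i => (v i : ℂ)) = fun i => ((Q *ᵥ v) i : ℂ) :=
  funext fun i => (RingHom.map_mulVec Complex.ofRealHom Q v i).symm

lemma map_ofReal_mulVec_mem_complexify {V W : Submodule ℝ (ι → ℝ)} {Q : Matrix ι ι ℝ}
    (hQ : ∀ v ∈ V, Q *ᵥ v ∈ W) {z : ι → ℂ} (hz : z ∈ complexify V) :
    Q.map ((↑·) : ℝ → ℂ) *ᵥ z ∈ complexify W := by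
  have : complexify V ≤ (complexify W).comap (Q.map ((↑·) : ℝ → ℂ)).mulVecLin := by
    refine span_le.2 ?_
    rintro _ ⟨v, hv, rfl⟩
    exact subset_span ⟨_, hQ v hv, (map_ofReal_mulVec Q v).symm⟩
  exact this hz

end Complexify

theorem Schur.of_invariant {n : ℕ} (V : Submodule ℝ (Fin n → ℝ))
    {M M₀ N : Matrix (Fin n) (Fin n) ℝ} (hN : ∀ v ∈ V, N *ᵥ v ∈ V)
    (hM₀ : ∀ v ∈ V, M *ᵥ v = M₀ *ᵥ v) (hMN : ∀ v, (M - N) *ᵥ v ∈ V)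
    (hSM₀ : Schur M₀) (hSN : Schur N) : Schur M := by
  have hsub := Module.End.spectrum_subset_union_of_invariant (complexify V)
    (f := toLin' (M.map ((↑·) : ℝ → ℂ))) (f₀ := toLin' (M₀.map ((↑·) : ℝ → ℂ)))
    (g := toLin' (N.map ((↑·) : ℝ → ℂ)))
    (fun w hw => by simpa using map_ofReal_mulVec_mem_complexify hN hw)
    (fun w hw => by
      have := map_ofReal_mulVec_mem_complexify (W := ⊥) (Q := M - M₀)
        (fun v hv => by simp [sub_mulVec, hM₀ v hv]) hw
      simpa [complexify_bot, Matrix.map_sub, sub_mulVec, sub_eq_zero] using this)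
    (fun v => by
      have := map_ofReal_mulVec_mem_complexify (V := (⊤ : Submodule ℝ (Fin n → ℝ)))
        (Q := M - N) (fun v _ => hMN v) (complexify_top.symm ▸ mem_top : v ∈ complexify ⊤)
      simpa [Matrix.map_sub, sub_mulVec] using this)
  simp only [spectrum_toLin'] at hsub
  intro μ hμ
  rcases hsub hμ with h | h
  exacts [hSM₀ μ h, hSN μ h]

section GreedyExperiment

variable {K E F : Type*} [Field K] [AddCommGroup E] [Module K E] [AddCommGroup F] [Module K F]
  (a : E →ₗ[K] E) (b : F →ₗ[K] E)

def invariantSubspaces (x₀ : E) : Set (Submodule K E) :=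
  {U | x₀ ∈ U ∧ ∀ x ∈ U, ∀ u, a x + b u ∈ U}

/-- With `S` the span of the samples `(x(s), u(s))`, `s < t`, and `x = x(t)`, this is the span
of the visited states `x(0), …, x(t)`. -/
def visitedStates (S : Submodule K (E × F)) (x : E) : Submodule K E :=
  S.map (LinearMap.fst K E F) ⊔ K ∙ x

noncomputable def greedyInput (S : Submodule K (E × F)) (x : E) : F :=
  open Classical in
  if h : ∃ u, a x + b u ∉ visitedStates S x then h.choose
  else if h' : ∃ u, (x, u) ∉ S then h'.choose else 0

noncomputable def greedyStep (p : Submodule K (E × F) × E) : Submodule K (E × F) × E :=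
  (p.1 ⊔ K ∙ (p.2, greedyInput a b p.1 p.2), a p.2 + b (greedyInput a b p.1 p.2))

/-- The second condition says that each past sample `(x(s), u(s))` leads to the visited
state `x(s + 1)`. -/
def GreedyInvariant (V : Submodule K E) (x₀ : E) (p : Submodule K (E × F) × E) : Prop :=
  x₀ ∈ visitedStates p.1 p.2 ∧ p.1.map (a.coprod b) ≤ visitedStates p.1 p.2 ∧
    p.1 ≤ V.prod ⊤ ∧ p.2 ∈ V

variable {a b}

lemma visitedStates_sup_span_singleton (S : Submodule K (E × F)) (x : E) (u : F) :
    visitedStates (S ⊔ K ∙ (x, u)) (a x + b u) = visitedStates S x ⊔ K ∙ (a x + b u) := by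
  simp only [visitedStates, Submodule.map_sup, Submodule.map_span, Set.image_singleton,
    LinearMap.fst_apply, sup_assoc]

lemma prod_top_le_of_forall_mem {S : Submodule K (E × F)} {x : E} (h : ∀ u, (x, u) ∈ S) :
    (visitedStates S x).prod ⊤ ≤ S := by
  have h₀ : ∀ u, ((0 : E), u) ∈ S := fun u => by simpa using sub_mem (h u) (h 0)
  have hfst : visitedStates S x ≤ S.comap (LinearMap.inl K E F) := by
    refine sup_le ?_ ((span_singleton_le_iff_mem _ _).2 (h 0))
    rintro _ ⟨⟨v, u⟩, hw, rfl⟩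
    simpa using sub_mem hw (h₀ u)
  rintro ⟨v, u⟩ ⟨hv, -⟩
  simpa using add_mem (show (v, 0) ∈ S from hfst hv) (h₀ u)

variable {V : Submodule K E} {x₀ : E}

lemma le_visitedStates_of_forall_mem (hV : V ∈ lowerBounds (invariantSubspaces a b x₀))
    {S : Submodule K (E × F)} {x : E} (hx₀ : x₀ ∈ visitedStates S x)
    (hS : S.map (a.coprod b) ≤ visitedStates S x)
    (hstuck : ∀ u, a x + b u ∈ visitedStates S x) : V ≤ visitedStates S x := by
  set X := visitedStates S x
  have hb : ∀ u, b u ∈ X := fun u => by simpa using sub_mem (hstuck u) (hstuck 0)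
  have ha : X ≤ X.comap a := by
    refine sup_le ?_ ((span_singleton_le_iff_mem _ _).2 (by simpa using hstuck 0))
    rintro _ ⟨w, hw, rfl⟩
    have : a w.1 + b w.2 ∈ X := hS ⟨w, hw, rfl⟩
    simpa using sub_mem this (hb w.2)
  exact hV ⟨hx₀, fun v hv u => add_mem (ha hv) (hb u)⟩

lemma GreedyInvariant.step (hV : ∀ x ∈ V, ∀ u, a x + b u ∈ V)
    {p : Submodule K (E × F) × E} (hp : GreedyInvariant a b V x₀ p) :
    GreedyInvariant a b V x₀ (greedyStep a b p) := by
  obtain ⟨hx₀, hS, hSV, hxV⟩ := hp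
  simp only [GreedyInvariant, greedyStep, visitedStates_sup_span_singleton]
  refine ⟨mem_sup_left hx₀, ?_, sup_le hSV ?_, hV _ hxV _⟩
  · rw [Submodule.map_sup, Submodule.map_span, Set.image_singleton, LinearMap.coprod_apply]
    exact sup_le_sup_right hS _
  · exact (span_singleton_le_iff_mem _ _).2 ⟨hxV, trivial⟩

lemma GreedyInvariant.notMem_or_prod_top_le (hV : V ∈ lowerBounds (invariantSubspaces a b x₀))
    {p : Submodule K (E × F) × E} (hp : GreedyInvariant a b V x₀ p) :
    (p.2, greedyInput a b p.1 p.2) ∉ p.1 ∨ V.prod ⊤ ≤ p.1 := by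
  obtain ⟨S, x⟩ := p
  obtain ⟨hx₀, hS, -, -⟩ := hp
  by_cases hnew : ∃ u, a x + b u ∉ visitedStates S x
  · left
    intro hmem
    simp only [greedyInput, dif_pos hnew] at hmem
    exact hnew.choose_spec (hS ⟨_, hmem, rfl⟩)
  by_cases hcol : ∃ u, (x, u) ∉ S
  · left
    simpa only [greedyInput, dif_neg hnew, dif_pos hcol] using hcol.choose_spec
  simp only [not_exists, not_not] at hnew hcol
  right
  calc V.prod ⊤ ≤ (visitedStates S x).prod ⊤ :=
        prod_mono (le_visitedStates_of_forall_mem hV hx₀ hS hnew) le_rfl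
    _ ≤ S := prod_top_le_of_forall_mem hcol

lemma GreedyInvariant.le_finrank_step_or [FiniteDimensional K E] [FiniteDimensional K F]
    (hV : V ∈ lowerBounds (invariantSubspaces a b x₀))
    {p : Submodule K (E × F) × E} (hp : GreedyInvariant a b V x₀ p) {t : ℕ}
    (ht : t ≤ finrank K p.1 ∨ V.prod ⊤ ≤ p.1) :
    t + 1 ≤ finrank K (greedyStep a b p).1 ∨ V.prod ⊤ ≤ (greedyStep a b p).1 := by
  have hle : p.1 ≤ (greedyStep a b p).1 := le_sup_left
  rcases hp.notMem_or_prod_top_le hV with hnew | hfull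
  · rcases ht with ht | ht
    · have hlt : p.1 < (greedyStep a b p).1 := SetLike.lt_iff_le_and_exists.2
        ⟨hle, _, mem_sup_right (mem_span_singleton_self _), hnew⟩
      exact Or.inl ((Nat.succ_le_succ ht).trans (Submodule.finrank_lt_finrank_of_lt hlt))
    · exact Or.inr (ht.trans hle)
  · exact Or.inr (hfull.trans hle)

lemma greedyInvariant_iterate (hV : V ∈ invariantSubspaces a b x₀) (t : ℕ) :
    GreedyInvariant a b V x₀ ((greedyStep a b)^[t] (⊥, x₀)) := by
  induction t with
  | zero => exact ⟨mem_sup_right (mem_span_singleton_self _), by simp, bot_le, hV.1⟩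
  | succ t ih => rw [Function.iterate_succ_apply']; exact ih.step hV.2

lemma le_finrank_iterate_or [FiniteDimensional K E] [FiniteDimensional K F]
    (hV : IsLeast (invariantSubspaces a b x₀) V) (t : ℕ) :
    t ≤ finrank K ((greedyStep a b)^[t] (⊥, x₀)).1 ∨
      V.prod ⊤ ≤ ((greedyStep a b)^[t] (⊥, x₀)).1 := by
  induction t with
  | zero => exact Or.inl (Nat.zero_le _)
  | succ t ih =>
    rw [Function.iterate_succ_apply']
    exact (greedyInvariant_iterate hV.1 t).le_finrank_step_or hV.2 ih

lemma finrank_prod_top [FiniteDimensional K E] [FiniteDimensional K F] (W : Submodule K E) :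
    finrank K (W.prod (⊤ : Submodule K F)) = finrank K W + finrank K F := by
  have : W.prod (⊤ : Submodule K F) =
      LinearMap.range (W.subtype.prodMap (LinearMap.id : F →ₗ[K] F)) := by
    ext ⟨v, u⟩; simp
  rw [this, LinearMap.finrank_range_of_inj (W.injective_subtype.prodMap Function.injective_id),
    Module.finrank_prod]

theorem exists_trajectory_span_eq_prod_top [FiniteDimensional K E] [FiniteDimensional K F]
    (hV : IsLeast (invariantSubspaces a b x₀) V) :
    ∃ (x : ℕ → E) (u : ℕ → F), x 0 = x₀ ∧ (∀ t, x (t + 1) = a (x t) + b (u t)) ∧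
      span K ((fun t => (x t, u t)) '' Set.Iio (finrank K V + finrank K F)) = V.prod ⊤ := by
  set p : ℕ → Submodule K (E × F) × E := fun t => (greedyStep a b)^[t] (⊥, x₀)
  have hsucc : ∀ t, p (t + 1) = greedyStep a b (p t) :=
    fun t => Function.iterate_succ_apply' _ _ _
  refine ⟨fun t => (p t).2, fun t => greedyInput a b (p t).1 (p t).2, rfl,
    fun t => by dsimp only; rw [hsucc]; rfl, ?_⟩
  have hspan : ∀ t, span K ((fun s => ((p s).2, greedyInput a b (p s).1 (p s).2)) '' Set.Iio t)
      = (p t).1 := by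
    intro t
    induction t with
    | zero => simp [p]
    | succ t ih =>
      rw [Set.Iio_add_one_eq_Iic, ← Set.Iio_insert, Set.image_insert_eq, span_insert, ih, hsucc,
        greedyStep, sup_comm]
  rw [hspan]
  have hle := (greedyInvariant_iterate hV.1 (finrank K V + finrank K F)).2.2.1
  rcases le_finrank_iterate_or hV (finrank K V + finrank K F) with h | h
  · exact eq_of_le_of_finrank_le hle (by rwa [finrank_prod_top])
  · exact le_antisymm hle h

end GreedyExperiment

section Reachability

variable {n : ℕ} (A : Matrix (Fin n) (Fin n) ℝ)

lemma pow_mulVec_mem_span_pow_mulVec (v : Fin n → ℝ) (j : ℕ) :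
    A ^ j *ᵥ v ∈ span ℝ (Set.range fun k : Fin n => A ^ (k : ℕ) *ᵥ v) := by
  rcases Nat.eq_zero_or_pos n with rfl | hn
  · rw [Subsingleton.elim (A ^ j *ᵥ v) 0]
    exact zero_mem _
  -- Cayley–Hamilton: `A ^ j` is a polynomial of degree `< n` in `A`.
  have hdeg : (Polynomial.X ^ j %ₘ A.charpoly).natDegree < n := by
    have hne : A.charpoly ≠ 1 := fun h => by
      have := A.charpoly_natDegree_eq_dim
      simp only [h, Polynomial.natDegree_one, Fintype.card_fin] at this
      omega
    simpa [A.charpoly_natDegree_eq_dim] using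
      Polynomial.natDegree_modByMonic_lt _ A.charpoly_monic hne
  rw [A.pow_eq_aeval_mod_charpoly, Polynomial.aeval_eq_sum_range' hdeg, sum_mulVec]
  refine sum_mem fun i hi => ?_
  rw [smul_mulVec]
  exact smul_mem _ _ (subset_span ⟨⟨i, Finset.mem_range.1 hi⟩, rfl⟩)

variable {p : Type*} [Fintype p]

lemma Rspace_eq_span (C : Matrix (Fin n) p ℝ) :
    Rspace A C = span ℝ (Set.range fun q : Fin n × p => A ^ (q.1 : ℕ) *ᵥ C.col q.2) :=
  range_mulVecLin _

lemma pow_mulVec_col_mem_Rspace (C : Matrix (Fin n) p ℝ) (j : ℕ) (c : p) :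
    A ^ j *ᵥ C.col c ∈ Rspace A C := by
  rw [Rspace_eq_span]
  refine span_mono ?_ (pow_mulVec_mem_span_pow_mulVec A _ j)
  exact Set.range_subset_iff.2 fun k => ⟨(k, c), rfl⟩

theorem Rspace_isLeast (C : Matrix (Fin n) p ℝ) :
    IsLeast {U | colSpan C ≤ U ∧ ∀ v ∈ U, A *ᵥ v ∈ U} (Rspace A C) := by
  refine ⟨⟨?_, fun v hv => ?_⟩, fun U ⟨hC, hA⟩ => ?_⟩
  · rw [colSpan, range_mulVecLin, span_le]
    rintro _ ⟨c, rfl⟩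
    simpa using pow_mulVec_col_mem_Rspace A C 0 c
  · have : Rspace A C ≤ (Rspace A C).comap A.mulVecLin := by
      rw [Rspace_eq_span A C, span_le]
      rintro _ ⟨⟨k, c⟩, rfl⟩
      simpa only [SetLike.mem_coe, mem_comap, mulVecLin_apply, mulVec_mulVec, ← pow_succ',
        ← Rspace_eq_span] using pow_mulVec_col_mem_Rspace A C (k + 1) c
    exact this hv
  · rw [Rspace_eq_span, span_le]
    rintro _ ⟨⟨k, c⟩, rfl⟩
    suffices ∀ j : ℕ, A ^ j *ᵥ C.col c ∈ U from this k
    intro j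
    induction j with
    | zero =>
      rw [pow_zero, one_mulVec]
      exact hC (by rw [colSpan, range_mulVecLin]; exact subset_span ⟨c, rfl⟩)
    | succ j ih => simpa [pow_succ', ← mulVec_mulVec] using hA _ ih

lemma augCol_mulVec {m : ℕ} (B : Matrix (Fin n) (Fin m) ℝ) (x0 : Fin n → ℝ)
    (w : Fin m ⊕ Fin 1 → ℝ) : augCol B x0 *ᵥ w = B *ᵥ (w ∘ Sum.inl) + w (Sum.inr 0) • x0 := by
  rw [augCol, fromCols_mulVec]
  congr 1
  funext i
  simp [mulVec, dotProduct, mul_comm]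

theorem Rspace_augCol_isLeast {m : ℕ} (B : Matrix (Fin n) (Fin m) ℝ) (x0 : Fin n → ℝ) :
    IsLeast (invariantSubspaces A.mulVecLin B.mulVecLin x0) (Rspace A (augCol B x0)) := by
  obtain ⟨⟨hC, hA⟩, hmin⟩ := Rspace_isLeast A (augCol B x0)
  have hmem : ∀ w, augCol B x0 *ᵥ w ∈ Rspace A (augCol B x0) :=
    fun w => hC (LinearMap.mem_range_self _ w)
  refine ⟨⟨?_, fun v hv u => add_mem (hA v hv) ?_⟩, fun U ⟨hx0, hU⟩ => hmin ⟨?_, ?_⟩⟩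
  · simpa [augCol_mulVec] using hmem (Sum.elim 0 1)
  · simpa [augCol_mulVec] using hmem (Sum.elim u 0)
  · rintro _ ⟨w, rfl⟩
    rw [mulVecLin_apply, augCol_mulVec]
    exact add_mem (by simpa using hU 0 (zero_mem U) _) (smul_mem _ _ hx0)
  · exact fun v hv => by simpa using hU v hv 0

end Reachability

lemma eq_and_eqOn_of_prod_top_le_span {K ι κ : Type*} [Field K] [Fintype ι] [Fintype κ]
    {A A' : Matrix ι ι K} {B B' : Matrix ι κ K} {V : Submodule K (ι → K)}
    {s : Set ((ι → K) × (κ → K))} (hs : V.prod ⊤ ≤ span K s)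
    (h : ∀ w ∈ s, A' *ᵥ w.1 + B' *ᵥ w.2 = A *ᵥ w.1 + B *ᵥ w.2) :
    B' = B ∧ ∀ v ∈ V, A' *ᵥ v = A *ᵥ v := by
  have hs' : span K s ≤ LinearMap.eqLocus (A'.mulVecLin.coprod B'.mulVecLin)
      (A.mulVecLin.coprod B.mulVecLin) :=
    span_le.2 fun w hw => by simpa using h w hw
  refine ⟨ext_iff_mulVec.2 fun u => ?_, fun v hv => ?_⟩
  · simpa using hs' (hs (show ((0 : ι → K), u) ∈ V.prod ⊤ from ⟨zero_mem V, trivial⟩))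
  · simpa using hs' (hs (show (v, (0 : κ → K)) ∈ V.prod ⊤ from ⟨hv, trivial⟩))

theorem stmt_18_general {n m : ℕ}
    (A : Matrix (Fin n) (Fin n) ℝ) (B : Matrix (Fin n) (Fin m) ℝ)
    (hstab : Stabilizable A B) (x0 : Fin n → ℝ) :
    ∃ (u : Fin (Module.finrank ℝ (Rspace A (augCol B x0)) + m) → Fin m → ℝ)
      (x : Fin (Module.finrank ℝ (Rspace A (augCol B x0)) + m + 1) → Fin n → ℝ),
      Consistent A B u x ∧ x 0 = x0 ∧ InfStab (SigmaStab n m) u x := by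
  have hV := Rspace_augCol_isLeast A B x0
  obtain ⟨x, u, hx0, hstep, hspan⟩ := exists_trajectory_span_eq_prod_top hV
  rw [finrank_fin_fun] at hspan
  refine ⟨fun t => u t, fun t => x t, fun t => hstep t, hx0, ?_⟩
  obtain ⟨K, hK⟩ := hstab
  refine ⟨K, ?_⟩
  rintro ⟨A', B'⟩ ⟨hD, K', hK'⟩
  obtain ⟨hB', hA'⟩ := eq_and_eqOn_of_prod_top_le_span hspan.ge (A := A) (B := B) <| by
    rintro _ ⟨t, ht, rfl⟩
    exact (hD ⟨t, ht⟩).symm.trans (hstep t)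
  rw [hB'] at hK' ⊢
  have hB : ∀ w, B *ᵥ w ∈ Rspace A (augCol B x0) := fun w => by
    simpa using hV.1.2 0 (zero_mem _) w
  refine Schur.of_invariant (Rspace A (augCol B x0)) (N := A' + B * K') (fun v hv => ?_)
    (fun v hv => ?_) (fun v => ?_) hK hK'
  · rw [add_mulVec, hA' v hv, ← mulVec_mulVec]
    exact hV.1.2 v hv _
  · rw [add_mulVec, add_mulVec, hA' v hv]
  · rw [add_sub_add_left_eq_sub, ← Matrix.mul_sub, ← mulVec_mulVec]
    exact hB _

/-- For a stabilizable `(A,B)` and any initial state `x₀`, there exists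
data of length `T = dim R(A,[B x₀]) + m` consistent with `(A,B)`, starting at `x₀`,
that is `Σ_stab`-informative for stabilization. -/
theorem stmt_18 {n m : ℕ} (hn : 0 < n) (hm : 0 < m)
    (A : Matrix (Fin n) (Fin n) ℝ) (B : Matrix (Fin n) (Fin m) ℝ)
    (hstab : Stabilizable A B) (x0 : Fin n → ℝ) :
    ∃ (u : Fin (Module.finrank ℝ (Rspace A (augCol B x0)) + m) → Fin m → ℝ)
      (x : Fin (Module.finrank ℝ (Rspace A (augCol B x0)) + m + 1) → Fin n → ℝ),
      Consistent A B u x ∧ x 0 = x0 ∧ InfStab (SigmaStab n m) u x :=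
  stmt_18_general A B hstab x0
end
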